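/- In the generalized Pólya urn setting of Lemma 6 with a ≤ Z_1 ≤ b a.s. for constants 0 < a < b, and B_1, B_2, ... pairwise disjoint measurable subsets of Y, one has E(‖a_{n+1} − μ‖²) ≤ (c_1/n)·P(Y_1 ∈ ∪_k B_k), where ‖a_{n+1} − μ‖ = sup_k |a_{n+1}(B_k) − μ(B_k)|, a_n(B) = P(Y_{n+1} ∈ B|G_n), μ(B) = a.s. lim a_n(B), and c_1 is a constant depending only on a, b, α. -/

import Mathlib

open MeasureTheory Filter Set

/-- The σ-field generated by the first `n` coordinates. -/
noncomputable def cylG (S : Type*) [MeasurableSpace S] (n : ℕ) : MeasurableSpace (ℕ → S) :=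
  MeasurableSpace.comap (fun ω (i : Fin n) => ω i) inferInstance

/-- Empirical frequency of `B` among the first `n` observations. -/
noncomputable def empMeas {S : Type*} (n : ℕ) (B : Set S) (ω : ℕ → S) : ℝ :=
  (n : ℝ)⁻¹ * ∑ i ∈ Finset.range n, B.indicator (fun _ => (1 : ℝ)) (ω i)

/-- The predictive probability `a_n(B) = P(X_{n+1} ∈ B ∣ G_n)` (0-indexed). -/
noncomputable def predProb {S : Type*} [MeasurableSpace S] (P : Measure (ℕ → S))
    (n : ℕ) (B : Set S) : (ℕ → S) → ℝ :=
  P[fun ω => B.indicator (fun _ => (1 : ℝ)) (ω n) | cylG S n]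

/-- The coordinate sequence is conditionally identically distributed under `P`. -/
def CID {S : Type*} [MeasurableSpace S] (P : Measure (ℕ → S)) : Prop :=
  ∀ B : Set S, MeasurableSet B → ∀ n k : ℕ, n < k →
    (P[fun ω => B.indicator (fun _ => (1 : ℝ)) (ω k) | cylG S n])
      =ᵐ[P] P[fun ω => B.indicator (fun _ => (1 : ℝ)) (ω n) | cylG S n]

/-- `W_n(B) = √n (μ_n(B) - μ(B))`, given the limit random measure `μ` (as `μlim`). -/
noncomputable def Wn {S : Type*} (μlim : Set S → (ℕ → S) → ℝ) (n : ℕ) (B : Set S)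
    (ω : ℕ → S) : ℝ :=
  Real.sqrt n * (empMeas n B ω - μlim B ω)

/-- `D` is countably determined: some countable `D₀ ⊆ D` realizes the same sup-distance
between any two probability laws on `S`. -/
def CountablyDetermined {S : Type*} [MeasurableSpace S] (D : Set (Set S)) : Prop :=
  (∀ B ∈ D, MeasurableSet B) ∧
  ∃ D0 ⊆ D, D0.Countable ∧ ∀ ν1 ν2 : Measure S, IsProbabilityMeasure ν1 →
    IsProbabilityMeasure ν2 →
    (⨆ B : D0, |(ν1 B).toReal - (ν2 B).toReal|) = ⨆ B : D, |(ν1 B).toReal - (ν2 B).toReal|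

/-- The predictive probability for the `Y`-component in the Pólya urn setting. -/
noncomputable def predY {𝒴 : Type*} [MeasurableSpace 𝒴] (P : Measure (ℕ → 𝒴 × ℝ))
    (n : ℕ) (B : Set 𝒴) : (ℕ → 𝒴 × ℝ) → ℝ :=
  P[fun ω => B.indicator (fun _ => (1 : ℝ)) ((ω n).1) | cylG (𝒴 × ℝ) n]

/-!
The predictive probabilities `a_n(B)` form a bounded martingale. Indeed
`a_{n+1}(B) - a_n(B) = Z_n / (α + Z_0 + ⋯ + Z_n) * (I_B(Y_n) - a_n(B))`, and since `Z_n` is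
independent of the past and of `Y_n`, conditioning on `Z_n` as well leaves the innovation
`I_B(Y_n) - a_n(B)` centred. By orthogonality of martingale increments,
`E (a_m(B) - a_{n+1}(B))²` is the sum of the expected squared increments. The `j`-th increment is
at most `b / (a (j + 1))` times `|I_B(Y_j) - a_j(B)|`, and for disjoint `B_k` the sum over `k` of
`(I_{B_k}(Y_j) - a_j(B_k))²` is at most `I_U(Y_j) + a_j(U)`, `U = ⋃ B_k`, whose mean is
`2 P(Y_0 ∈ U)`. Summing `(j + 1)⁻²` over `j > n` gives at most `1 / n`; let `m → ∞` and bound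
`sup_k` by the sum over `k`.
-/

open MeasureTheory ProbabilityTheory Filter Set Topology
open scoped ENNReal

namespace MeasureTheory

variable {Ω E : Type*} {mΩ : MeasurableSpace Ω} {μ : Measure Ω}
  [NormedAddCommGroup E] [NormedSpace ℝ E]

theorem _root_.IsPiSystem.image2_inter {C D : Set (Set Ω)} (hC : IsPiSystem C) (hD : IsPiSystem D) :
    IsPiSystem (image2 (· ∩ ·) C D) := by
  rintro _ ⟨s₁, hs₁, t₁, ht₁, rfl⟩ _ ⟨s₂, hs₂, t₂, ht₂, rfl⟩ hne
  rw [inter_inter_inter_comm] at hne ⊢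
  exact ⟨_, hC _ hs₁ _ hs₂ hne.left, _, hD _ ht₁ _ ht₂ hne.right, rfl⟩

theorem _root_.MeasurableSpace.sup_eq_generateFrom_image2_inter (m₁ m₂ : MeasurableSpace Ω) :
    m₁ ⊔ m₂ = MeasurableSpace.generateFrom
      (image2 (· ∩ ·) {s | MeasurableSet[m₁] s} {t | MeasurableSet[m₂] t}) := by
  refine le_antisymm (sup_le ?_ ?_) (MeasurableSpace.generateFrom_le ?_)
  · exact fun s hs => .basic _ ⟨s, hs, univ, .univ, inter_univ s⟩
  · exact fun t ht => .basic _ ⟨univ, .univ, t, ht, univ_inter t⟩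
  · rintro _ ⟨s, hs, t, ht, rfl⟩
    exact (le_sup_left (a := m₁) _ hs).inter (le_sup_right (a := m₁) _ ht)

theorem setIntegral_eq_of_isPiSystem {m : MeasurableSpace Ω} (hm : m ≤ mΩ) {C : Set (Set Ω)}
    (hgen : m = MeasurableSpace.generateFrom C) (hC : IsPiSystem C) {f g : Ω → E}
    (hf : Integrable f μ) (hg : Integrable g μ) (huniv : ∫ ω, f ω ∂μ = ∫ ω, g ω ∂μ)
    (hbasic : ∀ s ∈ C, ∫ ω in s, f ω ∂μ = ∫ ω in s, g ω ∂μ) {s : Set Ω}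
    (hs : MeasurableSet[m] s) : ∫ ω in s, f ω ∂μ = ∫ ω in s, g ω ∂μ := by
  induction s, hs using MeasurableSpace.induction_on_inter hgen hC with
  | empty => simp
  | basic t ht => exact hbasic t ht
  | compl t ht ih =>
    rw [setIntegral_compl (hm _ ht) hf, setIntegral_compl (hm _ ht) hg, ih, huniv]
  | iUnion u hdisj hu ih =>
    rw [integral_iUnion (fun i => hm _ (hu i)) hdisj hf.integrableOn,
      integral_iUnion (fun i => hm _ (hu i)) hdisj hg.integrableOn]
    simp_rw [ih]

theorem setIntegral_inter_eq_smul_of_indep [CompleteSpace E] [IsProbabilityMeasure μ]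
    {m₁ m₂ : MeasurableSpace Ω}
    (hle₁ : m₁ ≤ mΩ) (hle₂ : m₂ ≤ mΩ) (hind : Indep m₁ m₂ μ) {f : Ω → E}
    (hf : StronglyMeasurable[m₁] f) (hfi : Integrable f μ) {s t : Set Ω}
    (hs : MeasurableSet[m₁] s) (ht : MeasurableSet[m₂] t) :
    ∫ ω in s ∩ t, f ω ∂μ = μ.real t • ∫ ω in s, f ω ∂μ := by
  rw [inter_comm, ← setIntegral_indicator (hle₁ _ hs),
    ← setIntegral_condExp hle₂ (hfi.indicator (hle₁ _ hs)) ht,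
    setIntegral_congr_ae (hle₂ _ ht)
      ((condExp_indep_eq hle₁ hle₂ (hf.indicator hs) hind).mono fun _ h _ => h),
    setIntegral_const, integral_indicator (hle₁ _ hs)]

theorem condExp_sup_of_indep [CompleteSpace E] [IsProbabilityMeasure μ]
    {m₀ m₁ m₂ : MeasurableSpace Ω}
    (h₀₁ : m₀ ≤ m₁) (hle₁ : m₁ ≤ mΩ) (hle₂ : m₂ ≤ mΩ) (hind : Indep m₁ m₂ μ) {f : Ω → E}
    (hf : StronglyMeasurable[m₁] f) (hfi : Integrable f μ) :
    μ[f | m₀ ⊔ m₂] =ᵐ[μ] μ[f | m₀] := by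
  have hle₀ := h₀₁.trans hle₁
  refine (ae_eq_condExp_of_forall_setIntegral_eq (sup_le hle₀ hle₂) hfi
    (fun _ _ _ => integrable_condExp.integrableOn) (fun s hs _ => ?_)
    (stronglyMeasurable_condExp.mono le_sup_left).aestronglyMeasurable).symm
  refine setIntegral_eq_of_isPiSystem (sup_le hle₀ hle₂)
    (MeasurableSpace.sup_eq_generateFrom_image2_inter m₀ m₂)
    ((@MeasurableSpace.isPiSystem_measurableSet _ m₀).image2_inter
      (@MeasurableSpace.isPiSystem_measurableSet _ m₂)) integrable_condExp hfi
    (integral_condExp hle₀) ?_ hs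
  rintro _ ⟨s, hs, t, ht, rfl⟩
  rw [setIntegral_inter_eq_smul_of_indep hle₁ hle₂ hind (stronglyMeasurable_condExp.mono h₀₁)
      integrable_condExp (h₀₁ _ hs) ht,
    setIntegral_inter_eq_smul_of_indep hle₁ hle₂ hind hf hfi (h₀₁ _ hs) ht,
    setIntegral_condExp hle₀ hfi hs]

theorem ae_condExp_mem_Icc [IsFiniteMeasure μ] {m : MeasurableSpace Ω} (hm : m ≤ mΩ) {f : Ω → ℝ}
    (hf : Integrable f μ) (h01 : ∀ ω, f ω ∈ Icc (0 : ℝ) 1) :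
    ∀ᵐ ω ∂μ, μ[f | m] ω ∈ Icc (0 : ℝ) 1 := by
  filter_upwards [condExp_nonneg (m := m) (ae_of_all μ fun ω => (h01 ω).1),
    condExp_mono (m := m) hf (integrable_const 1) (ae_of_all μ fun ω => (h01 ω).2)] with ω h0 h1
  exact ⟨h0, h1.trans_eq (by rw [condExp_const hm])⟩

theorem Martingale.integral_mul_sub_eq_zero [IsFiniteMeasure μ] {ℱ : Filtration ℕ mΩ}
    {f : ℕ → Ω → ℝ} (hf : Martingale f ℱ μ) {j : ℕ} {g : Ω → ℝ} (hg : StronglyMeasurable[ℱ j] g)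
    (hgf : Integrable (g * (f (j + 1) - f j)) μ) :
    ∫ ω, g ω * (f (j + 1) ω - f j ω) ∂μ = 0 := by
  have hint : ∀ i, Integrable (f i) μ := hf.integrable
  have hΔ : μ[f (j + 1) - f j | ℱ j] =ᵐ[μ] 0 := by
    filter_upwards [condExp_sub (hint (j + 1)) (hint j) (ℱ j), hf.condExp_ae_eq j.le_succ]
      with ω h1 h2
    rw [h1, Pi.sub_apply, h2, condExp_of_stronglyMeasurable (ℱ.le j) (hf.stronglyAdapted j)
      (hint j), sub_self, Pi.zero_apply]
  calc ∫ ω, g ω * (f (j + 1) ω - f j ω) ∂μ = ∫ ω, μ[g * (f (j + 1) - f j) | ℱ j] ω ∂μ :=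
        (integral_condExp (ℱ.le j)).symm
    _ = ∫ ω, (g * μ[f (j + 1) - f j | ℱ j]) ω ∂μ :=
        integral_congr_ae (condExp_mul_of_stronglyMeasurable_left hg hgf
          ((hint _).sub (hint _)))
    _ = 0 := integral_eq_zero_of_ae (hΔ.mono fun ω h => by simp [h])

theorem Martingale.integral_sq_sub_eq_sum [IsFiniteMeasure μ] {ℱ : Filtration ℕ mΩ}
    {f : ℕ → Ω → ℝ} (hf : Martingale f ℱ μ) (hL2 : ∀ n, MemLp (f n) 2 μ) {s m : ℕ}
    (hsm : s ≤ m) :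
    ∫ ω, (f m ω - f s ω) ^ 2 ∂μ = ∑ j ∈ Finset.Ico s m, ∫ ω, (f (j + 1) ω - f j ω) ^ 2 ∂μ := by
  induction m, hsm using Nat.le_induction with
  | base => simp
  | succ m hsm ih =>
    have hA : MemLp (f m - f s) 2 μ := (hL2 m).sub (hL2 s)
    have hD : MemLp (f (m + 1) - f m) 2 μ := (hL2 (m + 1)).sub (hL2 m)
    have horth : ∫ ω, (f m ω - f s ω) * (f (m + 1) ω - f m ω) ∂μ = 0 :=
      hf.integral_mul_sub_eq_zero ((hf.stronglyAdapted m).sub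
        ((hf.stronglyAdapted s).mono (ℱ.mono hsm))) (hA.integrable_mul hD)
    rw [Finset.sum_Ico_succ_top hsm, ← ih]
    calc ∫ ω, (f (m + 1) ω - f s ω) ^ 2 ∂μ
        = ∫ ω, ((f m ω - f s ω) ^ 2 + 2 * ((f m ω - f s ω) * (f (m + 1) ω - f m ω)))
            + (f (m + 1) ω - f m ω) ^ 2 ∂μ := by congr with ω; ring
      _ = _ := by
        have hA2 : Integrable (fun ω => (f m ω - f s ω) ^ 2) μ := hA.integrable_sq
        have hAD : Integrable (fun ω => 2 * ((f m ω - f s ω) * (f (m + 1) ω - f m ω))) μ :=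
          (hA.integrable_mul hD).const_mul 2
        have hD2 : Integrable (fun ω => (f (m + 1) ω - f m ω) ^ 2) μ := hD.integrable_sq
        rw [integral_add ?_ hD2, integral_add hA2 hAD, integral_const_mul, horth, mul_zero,
          add_zero]
        exact hA2.add hAD

theorem ofReal_sq_iSup_abs_le_iSup_sum_sq (d : ℕ → ℝ) :
    ENNReal.ofReal ((⨆ k, |d k|) ^ 2)
      ≤ ⨆ K, ENNReal.ofReal (∑ k ∈ Finset.range K, d k ^ 2) := by
  set T := ⨆ K, ENNReal.ofReal (∑ k ∈ Finset.range K, d k ^ 2)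
  rcases eq_or_ne T ⊤ with hT | hT
  · exact hT ▸ le_top
  have hterm : ∀ k, |d k| ≤ √T.toReal := fun k => by
    refine Real.abs_le_sqrt ((ENNReal.ofReal_le_iff_le_toReal hT).1 ?_)
    refine le_trans (ENNReal.ofReal_le_ofReal ?_)
      (le_iSup (fun K => ENNReal.ofReal (∑ k ∈ Finset.range K, d k ^ 2)) (k + 1))
    exact Finset.single_le_sum (fun i _ => sq_nonneg (d i)) (Finset.self_mem_range_succ k)
  have hsup : (⨆ k, |d k|) ^ 2 ≤ T.toReal := by
    calc (⨆ k, |d k|) ^ 2 ≤ √T.toReal ^ 2 :=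
          pow_le_pow_left₀ (Real.iSup_nonneg fun k => abs_nonneg _) (ciSup_le hterm) 2
      _ = T.toReal := Real.sq_sqrt ENNReal.toReal_nonneg
  exact (ENNReal.ofReal_le_ofReal hsup).trans ENNReal.ofReal_toReal_le

theorem integral_sq_iSup_abs_le {d : ℕ → Ω → ℝ} (hd : ∀ k, MemLp (d k) 2 μ) {C : ℝ}
    (hC : ∀ K, ∫ ω, ∑ k ∈ Finset.range K, d k ω ^ 2 ∂μ ≤ C) :
    ∫ ω, (⨆ k, |d k ω|) ^ 2 ∂μ ≤ C := by
  have hC0 : 0 ≤ C := by simpa using hC 0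
  have hint : ∀ K, Integrable (fun ω => ∑ k ∈ Finset.range K, d k ω ^ 2) μ := fun K =>
    integrable_finsetSum _ fun k _ => (hd k).integrable_sq
  have hmeas : AEStronglyMeasurable (fun ω => (⨆ k, |d k ω|) ^ 2) μ :=
    ((AEMeasurable.iSup fun k => (hd k).aestronglyMeasurable.aemeasurable.abs).pow_const
      2).aestronglyMeasurable
  rw [integral_eq_lintegral_of_nonneg_ae (ae_of_all _ fun _ => sq_nonneg _) hmeas]
  refine ENNReal.toReal_le_of_le_ofReal hC0 ?_
  calc ∫⁻ ω, ENNReal.ofReal ((⨆ k, |d k ω|) ^ 2) ∂μ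
      ≤ ∫⁻ ω, ⨆ K, ENNReal.ofReal (∑ k ∈ Finset.range K, d k ω ^ 2) ∂μ :=
        lintegral_mono fun ω => ofReal_sq_iSup_abs_le_iSup_sum_sq (d · ω)
    _ = ⨆ K, ∫⁻ ω, ENNReal.ofReal (∑ k ∈ Finset.range K, d k ω ^ 2) ∂μ :=
        lintegral_iSup' (fun K => (hint K).aemeasurable.ennreal_ofReal)
          (ae_of_all _ fun ω K L hKL => ENNReal.ofReal_le_ofReal
            (Finset.sum_le_sum_of_subset_of_nonneg (Finset.range_subset_range.2 hKL)
              fun k _ _ => sq_nonneg _))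
    _ ≤ ENNReal.ofReal C := iSup_le fun K => by
        rw [← ofReal_integral_eq_lintegral_ofReal (hint K)
          (ae_of_all _ fun ω => Finset.sum_nonneg fun k _ => sq_nonneg _)]
        exact ENNReal.ofReal_le_ofReal (hC K)

end MeasureTheory

theorem sum_Ico_inv_succ_sq_le (n m : ℕ) :
    ∑ j ∈ Finset.Ico (n + 1) m, ((j : ℝ) + 1)⁻¹ ^ 2 ≤ ((n : ℝ) + 1)⁻¹ := by
  rcases lt_or_ge m (n + 1) with hm | hm
  · rw [Finset.Ico_eq_empty_of_le hm.le, Finset.sum_empty]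
    positivity
  have hterm : ∀ j ∈ Finset.Ico (n + 1) m,
      ((j : ℝ) + 1)⁻¹ ^ 2 ≤ -((j + 1 : ℕ) : ℝ)⁻¹ - -(j : ℝ)⁻¹ := fun j hj => by
    have hj : (1 : ℝ) ≤ j := by exact_mod_cast (Nat.le_add_left 1 n).trans (Finset.mem_Ico.1 hj).1
    push_cast
    rw [inv_pow, neg_sub_neg, inv_sub_inv (by positivity) (by positivity), add_sub_cancel_left,
      one_div]
    exact inv_anti₀ (by positivity) (by nlinarith)
  calc _ ≤ _ := Finset.sum_le_sum hterm
    _ = -(m : ℝ)⁻¹ + ((n : ℝ) + 1)⁻¹ := by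
        rw [Finset.sum_Ico_sub (fun i : ℕ => -(i : ℝ)⁻¹) hm]; push_cast; ring
    _ ≤ ((n : ℝ) + 1)⁻¹ := by
        have : (0 : ℝ) ≤ (m : ℝ)⁻¹ := by positivity
        linarith

theorem sq_sub_le_add_of_mem_Icc {x y : ℝ} (hx : x ∈ Icc (0 : ℝ) 1) (hy : y ∈ Icc (0 : ℝ) 1) :
    (x - y) ^ 2 ≤ x + y := by
  nlinarith [hx.1, hx.2, hy.1, hy.2]

section Cylinder

variable {S : Type*} [MeasurableSpace S]

theorem cylG_le (n : ℕ) : cylG S n ≤ MeasurableSpace.pi :=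
  (measurable_pi_lambda (fun (ω : ℕ → S) (i : Fin n) => ω i)
    fun _ => measurable_pi_apply _).comap_le

theorem cylG_mono : Monotone (cylG S) := fun m n hmn => by
  have hrestrict : Measurable fun (x : Fin n → S) (i : Fin m) => x (Fin.castLE hmn i) :=
    measurable_pi_lambda _ fun _ => measurable_pi_apply _
  calc cylG S m
      = (MeasurableSpace.pi.comap fun (x : Fin n → S) (i : Fin m) => x (Fin.castLE hmn i)).comap
          fun ω (i : Fin n) => ω i := by rw [cylG, MeasurableSpace.comap_comp]; rfl
    _ ≤ cylG S n := MeasurableSpace.comap_mono hrestrict.comap_le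

theorem cylG_zero : cylG S 0 = ⊥ := by
  refine le_bot_iff.1 fun s ⟨u, _, hu⟩ => ?_
  have hconst : ∀ ω : ℕ → S, (fun i : Fin 0 => ω i) = finZeroElim := fun _ => Subsingleton.elim _ _
  rw [MeasurableSpace.measurableSet_bot_iff, ← hu]
  by_cases h : finZeroElim ∈ u
  · exact Or.inr (eq_univ_of_forall fun ω => by rwa [mem_preimage, hconst])
  · exact Or.inl (eq_empty_of_forall_notMem fun ω hω => h (by rwa [mem_preimage, hconst] at hω))

theorem measurable_apply_cylG {i n : ℕ} (hin : i < n) :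
    Measurable[cylG S n] fun ω : ℕ → S => ω i :=
  (measurable_pi_apply (⟨i, hin⟩ : Fin n)).comp
    (comap_measurable fun (ω : ℕ → S) (j : Fin n) => ω j)

noncomputable def cylFiltration (S : Type*) [MeasurableSpace S] :
    Filtration ℕ (MeasurableSpace.pi : MeasurableSpace (ℕ → S)) :=
  ⟨cylG S, cylG_mono, cylG_le⟩

end Cylinder

section PolyaUrn

variable {𝒴 : Type*}

noncomputable def yInd (n : ℕ) (B : Set 𝒴) (ω : ℕ → 𝒴 × ℝ) : ℝ :=
  B.indicator (fun _ => (1 : ℝ)) (ω n).1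

def urnMass (α : ℝ) (n : ℕ) (ω : ℕ → 𝒴 × ℝ) : ℝ :=
  α + ∑ i ∈ Finset.range n, (ω i).2

theorem yInd_mem_Icc (n : ℕ) (B : Set 𝒴) (ω : ℕ → 𝒴 × ℝ) : yInd n B ω ∈ Icc (0 : ℝ) 1 := by
  unfold yInd
  by_cases h : (ω n).1 ∈ B <;> simp [h]

theorem sum_yInd_le_yInd_iUnion {B : ℕ → Set 𝒴} (hdisj : Pairwise (Function.onFun Disjoint B))
    (n K : ℕ) (ω : ℕ → 𝒴 × ℝ) : ∑ k ∈ Finset.range K, yInd n (B k) ω ≤ yInd n (⋃ k, B k) ω := by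
  unfold yInd
  rw [← Finset.indicator_biUnion_apply _ _ fun i _ j _ hij => hdisj hij]
  exact indicator_le_indicator_of_subset (iUnion₂_subset fun k _ => subset_iUnion B k)
    (fun _ => zero_le_one) _

theorem urnMass_succ (α : ℝ) (n : ℕ) (ω : ℕ → 𝒴 × ℝ) :
    urnMass α (n + 1) ω = urnMass α n ω + (ω n).2 := by
  rw [urnMass, urnMass, Finset.sum_range_succ, add_assoc]

theorem add_mul_le_urnMass {α a : ℝ} {ω : ℕ → 𝒴 × ℝ} (ha : ∀ i, a ≤ (ω i).2) (n : ℕ) :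
    α + n * a ≤ urnMass α n ω := by
  simpa [urnMass] using Finset.sum_le_sum fun i (_ : i ∈ Finset.range n) => ha i

noncomputable def urnStep (α : ℝ) (n : ℕ) (ω : ℕ → 𝒴 × ℝ) : ℝ :=
  (ω n).2 / urnMass α (n + 1) ω

theorem urnMass_pos {α : ℝ} (hα : 0 < α) {ω : ℕ → 𝒴 × ℝ} (hZ : ∀ i, 0 ≤ (ω i).2) (n : ℕ) :
    0 < urnMass α n ω :=
  add_pos_of_pos_of_nonneg hα (Finset.sum_nonneg fun i _ => hZ i)

theorem urnStep_mem_Icc {α : ℝ} (hα : 0 < α) {ω : ℕ → 𝒴 × ℝ} (hZ : ∀ i, 0 ≤ (ω i).2) (n : ℕ) :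
    urnStep α n ω ∈ Icc (0 : ℝ) 1 := by
  have hmass := urnMass_pos hα hZ n
  rw [urnStep, urnMass_succ, mem_Icc, div_le_one (by linarith [hZ n])]
  exact ⟨div_nonneg (hZ n) (by linarith [hZ n]), by linarith⟩

theorem urnStep_le {α a b : ℝ} (hα : 0 ≤ α) (ha : 0 < a) {ω : ℕ → 𝒴 × ℝ}
    (hZ : ∀ i, (ω i).2 ∈ Icc a b) (n : ℕ) : urnStep α n ω ≤ b / a * ((n : ℝ) + 1)⁻¹ := by
  have hmass := add_mul_le_urnMass (α := α) (fun i => (hZ i).1) (n + 1)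
  push_cast at hmass
  calc urnStep α n ω ≤ b / ((n + 1) * a) :=
        div_le_div₀ (ha.le.trans ((hZ n).1.trans (hZ n).2)) (hZ n).2 (by positivity)
          (by linarith)
    _ = b / a * ((n : ℝ) + 1)⁻¹ := by field_simp

variable [MeasurableSpace 𝒴]

noncomputable def urnPred (P : Measure (ℕ → 𝒴 × ℝ)) (α : ℝ) (n : ℕ) (B : Set 𝒴)
    (ω : ℕ → 𝒴 × ℝ) : ℝ :=
  (α * (P {ω' | (ω' 0).1 ∈ B}).toReal + ∑ i ∈ Finset.range n, (ω i).2 * yInd i B ω)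
    / urnMass α n ω

theorem measurable_yInd_comap {n : ℕ} {B : Set 𝒴} (hB : MeasurableSet B) :
    Measurable[MeasurableSpace.comap (fun ω : ℕ → 𝒴 × ℝ => ((fun i : Fin n => ω i), (ω n).1))
      inferInstance] (yInd n B) :=
  (measurable_const.indicator hB).comp (measurable_snd.comp (comap_measurable _))

theorem measurable_yInd {n : ℕ} {B : Set 𝒴} (hB : MeasurableSet B) : Measurable (yInd n B) :=
  (measurable_const.indicator hB).comp (measurable_pi_apply n).fst

theorem cylG_le_comap_past_and_label (n : ℕ) :
    cylG (𝒴 × ℝ) n ≤ MeasurableSpace.comap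
      (fun ω : ℕ → 𝒴 × ℝ => ((fun i : Fin n => ω i), (ω n).1)) inferInstance :=
  (measurable_fst.comp (comap_measurable
    (fun ω : ℕ → 𝒴 × ℝ => ((fun i : Fin n => ω i), (ω n).1)))).comap_le

theorem measurable_urnMass (α : ℝ) (n : ℕ) : Measurable[cylG (𝒴 × ℝ) n] (urnMass α n) :=
  measurable_const.add (Finset.measurable_sum _ fun _ hi =>
    (measurable_apply_cylG (Finset.mem_range.1 hi)).snd)

theorem measurable_urnStep (α : ℝ) (n : ℕ) :
    Measurable[cylG (𝒴 × ℝ) n ⊔ MeasurableSpace.comap (fun ω : ℕ → 𝒴 × ℝ => (ω n).2)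
      inferInstance] (urnStep α n) := by
  have hZ : Measurable[cylG (𝒴 × ℝ) n ⊔ MeasurableSpace.comap (fun ω : ℕ → 𝒴 × ℝ => (ω n).2)
      inferInstance] fun ω : ℕ → 𝒴 × ℝ => (ω n).2 := (comap_measurable _).mono le_sup_right le_rfl
  have hstep : urnStep α n = fun ω : ℕ → 𝒴 × ℝ => (ω n).2 / (urnMass α n ω + (ω n).2) :=
    funext fun ω => by rw [urnStep, urnMass_succ]
  rw [hstep]
  exact hZ.div (((measurable_urnMass α n).mono le_sup_left le_rfl).add hZ)

theorem urnPred_zero {P : Measure (ℕ → 𝒴 × ℝ)} {α : ℝ} (hα : α ≠ 0) (B : Set 𝒴)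
    (ω : ℕ → 𝒴 × ℝ) : urnPred P α 0 B ω = (P {ω' | (ω' 0).1 ∈ B}).toReal := by
  simp [urnPred, urnMass, hα]

theorem urnPred_succ_sub (P : Measure (ℕ → 𝒴 × ℝ)) {α : ℝ} {n : ℕ} (B : Set 𝒴)
    {ω : ℕ → 𝒴 × ℝ} (h₀ : urnMass α n ω ≠ 0) (h₁ : urnMass α (n + 1) ω ≠ 0) :
    urnPred P α (n + 1) B ω - urnPred P α n B ω
      = (ω n).2 / urnMass α (n + 1) ω * (yInd n B ω - urnPred P α n B ω) := by
  rw [urnMass_succ] at h₁ ⊢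
  simp only [urnPred, Finset.sum_range_succ, urnMass_succ]
  field_simp
  ring

variable {P : Measure (ℕ → 𝒴 × ℝ)}

theorem integrable_yInd [IsFiniteMeasure P] (n : ℕ) {B : Set 𝒴} (hB : MeasurableSet B) :
    Integrable (yInd n B) P :=
  .of_bound (measurable_yInd hB).aestronglyMeasurable 1
    (ae_of_all _ fun ω => by
      rw [Real.norm_eq_abs, abs_of_nonneg (yInd_mem_Icc n B ω).1]; exact (yInd_mem_Icc n B ω).2)

theorem stronglyMeasurable_predY (n : ℕ) (B : Set 𝒴) :
    StronglyMeasurable[cylG (𝒴 × ℝ) n] (predY P n B) :=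
  stronglyMeasurable_condExp

theorem integrable_predY (n : ℕ) (B : Set 𝒴) : Integrable (predY P n B) P :=
  integrable_condExp

variable [IsProbabilityMeasure P]

theorem predY_mem_Icc (n : ℕ) {B : Set 𝒴} (hB : MeasurableSet B) :
    ∀ᵐ ω ∂P, predY P n B ω ∈ Icc (0 : ℝ) 1 :=
  ae_condExp_mem_Icc (cylG_le n) (integrable_yInd n hB) (yInd_mem_Icc n B)

theorem memLp_predY (n : ℕ) {B : Set 𝒴} (hB : MeasurableSet B) (p : ℝ≥0∞) :
    MemLp (predY P n B) p P :=
  .of_bound ((stronglyMeasurable_predY n B).mono (cylG_le n)).aestronglyMeasurable 1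
    ((predY_mem_Icc n hB).mono fun ω h => by
      rw [Real.norm_eq_abs, abs_of_nonneg h.1]; exact h.2)

theorem predY_zero {B : Set 𝒴} (hB : MeasurableSet B) :
    predY P 0 B = fun _ => (P {ω | (ω 0).1 ∈ B}).toReal := by
  have hind : yInd 0 B = {ω : ℕ → 𝒴 × ℝ | (ω 0).1 ∈ B}.indicator fun _ => 1 := by
    ext ω; by_cases h : (ω 0).1 ∈ B <;> simp [yInd, h]
  change P[yInd 0 B | cylG (𝒴 × ℝ) 0] = _
  rw [cylG_zero, condExp_bot]
  ext
  have hs : MeasurableSet {ω : ℕ → 𝒴 × ℝ | (ω 0).1 ∈ B} := (measurable_pi_apply 0).fst hB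
  rw [hind, integral_indicator_const _ hs, smul_eq_mul, mul_one, measureReal_def]

theorem sum_predY_le_predY_iUnion {B : ℕ → Set 𝒴} (hB : ∀ k, MeasurableSet (B k))
    (hdisj : Pairwise (Function.onFun Disjoint B)) (n K : ℕ) :
    ∀ᵐ ω ∂P, ∑ k ∈ Finset.range K, predY P n (B k) ω ≤ predY P n (⋃ k, B k) ω := by
  have hint : ∀ k ∈ Finset.range K, Integrable (yInd n (B k)) P :=
    fun k _ => integrable_yInd n (hB k)
  filter_upwards [condExp_finsetSum hint (cylG (𝒴 × ℝ) n),
    condExp_mono (m := cylG (𝒴 × ℝ) n) (integrable_finsetSum' _ hint)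
      (integrable_yInd n (MeasurableSet.iUnion hB)) (ae_of_all _ fun ω =>
        (Finset.sum_apply ω (Finset.range K) fun k => yInd n (B k)).trans_le
          (sum_yInd_le_yInd_iUnion hdisj n K ω))]
    with ω hsum hmono
  rw [hsum, Finset.sum_apply] at hmono
  exact hmono

theorem memLp_predY_sub_of_tendsto {B : Set 𝒴} (hB : MeasurableSet B) {L : (ℕ → 𝒴 × ℝ) → ℝ}
    (hL : ∀ᵐ ω ∂P, Tendsto (fun m => predY P m B ω) atTop (𝓝 (L ω))) (n : ℕ) (p : ℝ≥0∞) :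
    MemLp (fun ω => predY P n B ω - L ω) p P := by
  have hL01 : ∀ᵐ ω ∂P, L ω ∈ Icc (0 : ℝ) 1 := by
    filter_upwards [ae_all_iff.2 fun m => predY_mem_Icc m hB, hL] with ω h01 hω
    exact isClosed_Icc.mem_of_tendsto hω (Eventually.of_forall h01)
  refine .of_bound ((memLp_predY n hB p).aestronglyMeasurable.sub
    (aestronglyMeasurable_of_tendsto_ae atTop
      (fun m => (integrable_predY m B).aestronglyMeasurable) hL)) 1 ?_
  filter_upwards [predY_mem_Icc n hB, hL01] with ω h1 h2
  rw [Real.norm_eq_abs, abs_le]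
  constructor <;> linarith [h1.1, h1.2, h2.1, h2.2]

/-- The setting of Lemma 6 with observations `X_n = (Y_n, Z_n)` indexed from `0`; `urnPred` is the
explicit form of the predictive probability `a_n(B) = predY P n B`. -/
structure IsGenPolyaUrn (P : Measure (ℕ → 𝒴 × ℝ)) (α a b : ℝ) : Prop where
  alpha_pos : 0 < α
  weight_pos : 0 < a
  weight_mem : ∀ᵐ ω ∂P, ∀ n, (ω n).2 ∈ Icc a b
  indep : ∀ n : ℕ, Indep (MeasurableSpace.comap (fun ω : ℕ → 𝒴 × ℝ => (ω n).2) inferInstance)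
    (MeasurableSpace.comap (fun ω : ℕ → 𝒴 × ℝ => ((fun i : Fin n => ω i), (ω n).1))
      inferInstance) P
  predY_eq_urnPred : ∀ B : Set 𝒴, MeasurableSet B → ∀ n : ℕ, 1 ≤ n →
    predY P n B =ᵐ[P] urnPred P α n B

namespace IsGenPolyaUrn

variable {α a b : ℝ}

theorem predY_ae_eq_urnPred (h : IsGenPolyaUrn P α a b) {B : Set 𝒴} (hB : MeasurableSet B) :
    ∀ n, predY P n B =ᵐ[P] urnPred P α n B
  | 0 => .of_eq <| (predY_zero hB).trans (funext fun _ => (urnPred_zero h.alpha_pos.ne' B _).symm)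
  | n + 1 => h.predY_eq_urnPred B hB (n + 1) n.succ_pos

theorem predY_succ_sub_ae_eq (h : IsGenPolyaUrn P α a b) {B : Set 𝒴} (hB : MeasurableSet B)
    (n : ℕ) :
    predY P (n + 1) B - predY P n B =ᵐ[P] urnStep α n * (yInd n B - predY P n B) := by
  filter_upwards [h.predY_ae_eq_urnPred hB n, h.predY_ae_eq_urnPred hB (n + 1), h.weight_mem]
    with ω hn hn1 hZ
  have hZ0 : ∀ i, 0 ≤ (ω i).2 := fun i => h.weight_pos.le.trans (hZ i).1
  simp only [Pi.sub_apply, Pi.mul_apply, hn, hn1, urnStep]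
  exact urnPred_succ_sub P B (urnMass_pos h.alpha_pos hZ0 n).ne'
    (urnMass_pos h.alpha_pos hZ0 (n + 1)).ne'

theorem condExp_yInd_sup_weight (h : IsGenPolyaUrn P α a b) {B : Set 𝒴} (hB : MeasurableSet B)
    (n : ℕ) :
    P[yInd n B | cylG (𝒴 × ℝ) n ⊔ MeasurableSpace.comap (fun ω : ℕ → 𝒴 × ℝ => (ω n).2)
      inferInstance] =ᵐ[P] predY P n B := by
  have hpast : Measurable fun ω : ℕ → 𝒴 × ℝ => ((fun i : Fin n => ω i), (ω n).1) :=
    (measurable_pi_lambda _ fun _ => measurable_pi_apply _).prodMk (measurable_pi_apply n).fst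
  exact condExp_sup_of_indep (cylG_le_comap_past_and_label n) hpast.comap_le
    (measurable_pi_apply n).snd.comap_le (h.indep n).symm
    (measurable_yInd_comap hB).stronglyMeasurable (integrable_yInd n hB)

theorem martingale_predY (h : IsGenPolyaUrn P α a b) {B : Set 𝒴} (hB : MeasurableSet B) :
    Martingale (fun n => predY P n B) (cylFiltration (𝒴 × ℝ)) P := by
  refine martingale_of_condExp_sub_eq_zero_nat (fun n => stronglyMeasurable_predY n B)
    (fun n => integrable_predY n B) fun n => ?_
  set 𝒢 := cylG (𝒴 × ℝ) n ⊔ MeasurableSpace.comap (fun ω : ℕ → 𝒴 × ℝ => (ω n).2) inferInstance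
  have h𝒢 : 𝒢 ≤ MeasurableSpace.pi := sup_le (cylG_le n) (measurable_pi_apply n).snd.comap_le
  have hinnov : P[yInd n B - predY P n B | 𝒢] =ᵐ[P] 0 := by
    filter_upwards [condExp_sub (integrable_yInd n hB) (integrable_predY n B) 𝒢,
      h.condExp_yInd_sup_weight hB n] with ω hsub hyInd
    rw [hsub, Pi.sub_apply, hyInd, condExp_of_stronglyMeasurable h𝒢
      ((stronglyMeasurable_predY n B).mono le_sup_left) (integrable_predY n B), sub_self,
      Pi.zero_apply]
  have hstep_bound : ∀ᵐ ω ∂P, ‖urnStep α n ω‖ ≤ 1 := h.weight_mem.mono fun ω hZ => by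
    have := urnStep_mem_Icc h.alpha_pos (fun i => h.weight_pos.le.trans (hZ i).1) n
    rw [Real.norm_eq_abs, abs_of_nonneg this.1]
    exact this.2
  change P[predY P (n + 1) B - predY P n B | cylG (𝒴 × ℝ) n] =ᵐ[P] 0
  calc P[predY P (n + 1) B - predY P n B | cylG (𝒴 × ℝ) n]
      =ᵐ[P] P[urnStep α n * (yInd n B - predY P n B) | cylG (𝒴 × ℝ) n] :=
        condExp_congr_ae (h.predY_succ_sub_ae_eq hB n)
    _ =ᵐ[P] P[P[urnStep α n * (yInd n B - predY P n B) | 𝒢] | cylG (𝒴 × ℝ) n] :=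
        (condExp_condExp_of_le le_sup_left h𝒢).symm
    _ =ᵐ[P] P[urnStep α n * P[yInd n B - predY P n B | 𝒢] | cylG (𝒴 × ℝ) n] :=
        condExp_congr_ae (condExp_stronglyMeasurable_mul_of_bound h𝒢
          (measurable_urnStep α n).stronglyMeasurable
          ((integrable_yInd n hB).sub (integrable_predY n B)) 1 hstep_bound)
    _ =ᵐ[P] P[0 | cylG (𝒴 × ℝ) n] := condExp_congr_ae (hinnov.mono fun ω h => by simp [h])
    _ = 0 := condExp_zero

theorem integral_predY (h : IsGenPolyaUrn P α a b) {B : Set 𝒴} (hB : MeasurableSet B) (n : ℕ) :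
    ∫ ω, predY P n B ω ∂P = (P {ω | (ω 0).1 ∈ B}).toReal := by
  rw [← setIntegral_univ,
    ← (h.martingale_predY hB).setIntegral_eq n.zero_le MeasurableSet.univ, setIntegral_univ,
    predY_zero hB, integral_const, probReal_univ, one_smul]

theorem ae_sum_sq_increment_le (h : IsGenPolyaUrn P α a b) {B : ℕ → Set 𝒴}
    (hB : ∀ k, MeasurableSet (B k)) (hdisj : Pairwise (Function.onFun Disjoint B)) (j K : ℕ) :
    ∀ᵐ ω ∂P, ∑ k ∈ Finset.range K, (predY P (j + 1) (B k) ω - predY P j (B k) ω) ^ 2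
      ≤ (b / a * ((j : ℝ) + 1)⁻¹) ^ 2 * (yInd j (⋃ k, B k) ω + predY P j (⋃ k, B k) ω) := by
  set c := b / a * ((j : ℝ) + 1)⁻¹
  filter_upwards [h.weight_mem, ae_all_iff.2 fun k => h.predY_succ_sub_ae_eq (hB k) j,
    ae_all_iff.2 fun k => predY_mem_Icc j (hB k), sum_predY_le_predY_iUnion hB hdisj j K]
    with ω hZ hΔ h01 hsum
  have hstep := urnStep_mem_Icc h.alpha_pos (fun i => h.weight_pos.le.trans (hZ i).1) j
  have hstep_le : urnStep α j ω ≤ c := urnStep_le h.alpha_pos.le h.weight_pos hZ j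
  calc ∑ k ∈ Finset.range K, (predY P (j + 1) (B k) ω - predY P j (B k) ω) ^ 2
      = ∑ k ∈ Finset.range K, urnStep α j ω ^ 2 * (yInd j (B k) ω - predY P j (B k) ω) ^ 2 :=
        Finset.sum_congr rfl fun k _ => by
          have hΔk := hΔ k
          simp only [Pi.sub_apply, Pi.mul_apply] at hΔk
          rw [hΔk, mul_pow]
    _ ≤ ∑ k ∈ Finset.range K, c ^ 2 * (yInd j (B k) ω + predY P j (B k) ω) :=
        Finset.sum_le_sum fun k _ => mul_le_mul (pow_le_pow_left₀ hstep.1 hstep_le 2)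
          (sq_sub_le_add_of_mem_Icc (yInd_mem_Icc j (B k) ω) (h01 k)) (sq_nonneg _)
          (sq_nonneg _)
    _ = c ^ 2 * (∑ k ∈ Finset.range K, yInd j (B k) ω
          + ∑ k ∈ Finset.range K, predY P j (B k) ω) := by
        rw [← Finset.sum_add_distrib, Finset.mul_sum]
    _ ≤ c ^ 2 * (yInd j (⋃ k, B k) ω + predY P j (⋃ k, B k) ω) := by
        gcongr
        exact sum_yInd_le_yInd_iUnion hdisj j K ω

theorem integral_sum_sq_increment_le (h : IsGenPolyaUrn P α a b) {B : ℕ → Set 𝒴}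
    (hB : ∀ k, MeasurableSet (B k)) (hdisj : Pairwise (Function.onFun Disjoint B)) (j K : ℕ) :
    ∫ ω, ∑ k ∈ Finset.range K, (predY P (j + 1) (B k) ω - predY P j (B k) ω) ^ 2 ∂P
      ≤ 2 * (b / a) ^ 2 * ((j : ℝ) + 1)⁻¹ ^ 2 * (P {ω | (ω 0).1 ∈ ⋃ k, B k}).toReal := by
  set U := ⋃ k, B k
  have hU : MeasurableSet U := .iUnion hB
  have hyInd : ∫ ω, yInd j U ω ∂P = ∫ ω, predY P j U ω ∂P := (integral_condExp (cylG_le j)).symm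
  calc _ ≤ ∫ ω, (b / a * ((j : ℝ) + 1)⁻¹) ^ 2 * (yInd j U ω + predY P j U ω) ∂P :=
        integral_mono_ae (integrable_finsetSum _ fun k _ =>
          ((memLp_predY (j + 1) (hB k) 2).sub (memLp_predY j (hB k) 2)).integrable_sq)
          (((integrable_yInd j hU).add (integrable_predY j U)).const_mul _)
          (h.ae_sum_sq_increment_le hB hdisj j K)
    _ = (b / a * ((j : ℝ) + 1)⁻¹) ^ 2 * (2 * (P {ω | (ω 0).1 ∈ U}).toReal) := by
        rw [integral_const_mul, integral_add (integrable_yInd j hU) (integrable_predY j U), hyInd,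
          h.integral_predY hU, two_mul]
    _ = _ := by ring

theorem integral_sum_sq_sub_le (h : IsGenPolyaUrn P α a b) {B : ℕ → Set 𝒴}
    (hB : ∀ k, MeasurableSet (B k)) (hdisj : Pairwise (Function.onFun Disjoint B)) {n m : ℕ}
    (hnm : n + 1 ≤ m) (K : ℕ) :
    ∫ ω, ∑ k ∈ Finset.range K, (predY P m (B k) ω - predY P (n + 1) (B k) ω) ^ 2 ∂P
      ≤ 2 * (b / a) ^ 2 * ((n : ℝ) + 1)⁻¹ * (P {ω | (ω 0).1 ∈ ⋃ k, B k}).toReal := by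
  set p := (P {ω | (ω 0).1 ∈ ⋃ k, B k}).toReal
  have hsq : ∀ i l k, Integrable (fun ω => (predY P i (B k) ω - predY P l (B k) ω) ^ 2) P :=
    fun i l k => ((memLp_predY i (hB k) 2).sub (memLp_predY l (hB k) 2)).integrable_sq
  calc _ = ∑ k ∈ Finset.range K, ∫ ω, (predY P m (B k) ω - predY P (n + 1) (B k) ω) ^ 2 ∂P :=
        integral_finsetSum _ fun k _ => hsq _ _ k
    _ = ∑ k ∈ Finset.range K, ∑ j ∈ Finset.Ico (n + 1) m,
          ∫ ω, (predY P (j + 1) (B k) ω - predY P j (B k) ω) ^ 2 ∂P :=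
        Finset.sum_congr rfl fun k _ => (h.martingale_predY (hB k)).integral_sq_sub_eq_sum
          (fun i => memLp_predY i (hB k) 2) hnm
    _ = ∑ j ∈ Finset.Ico (n + 1) m,
          ∫ ω, ∑ k ∈ Finset.range K, (predY P (j + 1) (B k) ω - predY P j (B k) ω) ^ 2 ∂P := by
        rw [Finset.sum_comm]
        exact Finset.sum_congr rfl fun j _ => (integral_finsetSum _ fun k _ => hsq _ _ k).symm
    _ ≤ ∑ j ∈ Finset.Ico (n + 1) m, 2 * (b / a) ^ 2 * p * ((j : ℝ) + 1)⁻¹ ^ 2 :=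
        Finset.sum_le_sum fun j _ =>
          (h.integral_sum_sq_increment_le hB hdisj j K).trans_eq (by ring)
    _ ≤ 2 * (b / a) ^ 2 * p * ((n : ℝ) + 1)⁻¹ := by
        rw [← Finset.mul_sum]
        exact mul_le_mul_of_nonneg_left (sum_Ico_inv_succ_sq_le n m) (by positivity)
    _ = _ := by ring

theorem integral_sum_sq_sub_limit_le (h : IsGenPolyaUrn P α a b) {B : ℕ → Set 𝒴}
    (hB : ∀ k, MeasurableSet (B k)) (hdisj : Pairwise (Function.onFun Disjoint B))
    {L : ℕ → (ℕ → 𝒴 × ℝ) → ℝ}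
    (hL : ∀ k, ∀ᵐ ω ∂P, Tendsto (fun m => predY P m (B k) ω) atTop (𝓝 (L k ω))) (n K : ℕ) :
    ∫ ω, ∑ k ∈ Finset.range K, (predY P (n + 1) (B k) ω - L k ω) ^ 2 ∂P
      ≤ 2 * (b / a) ^ 2 * ((n : ℝ) + 1)⁻¹ * (P {ω | (ω 0).1 ∈ ⋃ k, B k}).toReal := by
  have hmeas : ∀ m, AEStronglyMeasurable
      (fun ω => ∑ k ∈ Finset.range K, (predY P (n + 1) (B k) ω - predY P m (B k) ω) ^ 2) P :=
    fun m => (integrable_finsetSum _ fun k _ =>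
      ((memLp_predY (n + 1) (hB k) 2).sub (memLp_predY m (hB k) 2)).integrable_sq).1
  have hbound : ∀ m, ∀ᵐ ω ∂P,
      ‖∑ k ∈ Finset.range K, (predY P (n + 1) (B k) ω - predY P m (B k) ω) ^ 2‖ ≤ K := by
    intro m
    filter_upwards [ae_all_iff.2 fun k => predY_mem_Icc (n + 1) (hB k),
      ae_all_iff.2 fun k => predY_mem_Icc m (hB k)] with ω h1 h2
    rw [Real.norm_of_nonneg (Finset.sum_nonneg fun k _ => sq_nonneg _)]
    simpa using Finset.sum_le_sum fun k (_ : k ∈ Finset.range K) =>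
      (show (predY P (n + 1) (B k) ω - predY P m (B k) ω) ^ 2 ≤ 1 by
        nlinarith [(h1 k).1, (h1 k).2, (h2 k).1, (h2 k).2])
  have hlim : ∀ᵐ ω ∂P, Tendsto
      (fun m => ∑ k ∈ Finset.range K, (predY P (n + 1) (B k) ω - predY P m (B k) ω) ^ 2) atTop
      (𝓝 (∑ k ∈ Finset.range K, (predY P (n + 1) (B k) ω - L k ω) ^ 2)) := by
    filter_upwards [ae_all_iff.2 hL] with ω hω
    exact tendsto_finsetSum _ fun k _ => (tendsto_const_nhds.sub (hω k)).pow 2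
  refine le_of_tendsto (tendsto_integral_of_dominated_convergence _ hmeas (integrable_const _)
    hbound hlim) (eventually_atTop.2 ⟨n + 1, fun m hm => ?_⟩)
  simp_rw [sub_sq_comm (predY P (n + 1) _ _)]
  exact h.integral_sum_sq_sub_le hB hdisj hm K

end IsGenPolyaUrn

end PolyaUrn

theorem stmt15_general {𝒴 : Type*} [MeasurableSpace 𝒴] (P : Measure (ℕ → 𝒴 × ℝ))
    [IsProbabilityMeasure P] (α a b : ℝ) (hα : 0 < α) (hab : 0 < a ∧ a < b)
    (hZ : ∀ᵐ ω ∂P, ∀ n, (ω n).2 ∈ Set.Icc a b)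
    (hindep : ∀ n : ℕ, ProbabilityTheory.Indep
      (MeasurableSpace.comap (fun ω => (ω n).2) inferInstance)
      (MeasurableSpace.comap
        (fun ω => ((fun i : Fin n => ω i), (ω n).1)) inferInstance) P)
    (hpred : ∀ B : Set 𝒴, MeasurableSet B → ∀ n : ℕ, 1 ≤ n →
      predY P n B =ᵐ[P] fun ω =>
        (α * (P {ω' | (ω' 0).1 ∈ B}).toReal
          + ∑ i ∈ Finset.range n, (ω i).2 * B.indicator (fun _ => (1 : ℝ)) ((ω i).1))
        / (α + ∑ i ∈ Finset.range n, (ω i).2))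
    (μlimY : Set 𝒴 → (ℕ → 𝒴 × ℝ) → ℝ)
    (hlim : ∀ B : Set 𝒴, MeasurableSet B →
      ∀ᵐ ω ∂P, Tendsto (fun n => predY P n B ω) atTop (nhds (μlimY B ω))) :
    ∃ c1 : ℝ, 0 < c1 ∧ ∀ B : ℕ → Set 𝒴, (∀ k, MeasurableSet (B k)) →
      Pairwise (Function.onFun Disjoint B) → ∀ n : ℕ, 1 ≤ n →
        ∫ ω, (⨆ k : ℕ, |predY P (n + 1) (B k) ω - μlimY (B k) ω|) ^ 2 ∂P
          ≤ c1 / n * (P {ω | (ω 0).1 ∈ ⋃ k, B k}).toReal := by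
  obtain ⟨ha, hab⟩ := hab
  have hurn : IsGenPolyaUrn P α a b := ⟨hα, ha, hZ, hindep, hpred⟩
  have hb : 0 < b := ha.trans hab
  refine ⟨2 * (b / a) ^ 2, by positivity, fun B hB hdisj n hn => ?_⟩
  have hL : ∀ k, ∀ᵐ ω ∂P, Tendsto (fun m => predY P m (B k) ω) atTop (𝓝 (μlimY (B k) ω)) :=
    fun k => hlim (B k) (hB k)
  refine integral_sq_iSup_abs_le (fun k => memLp_predY_sub_of_tendsto (hB k) (hL k) (n + 1) 2)
    fun K => (hurn.integral_sum_sq_sub_limit_le hB hdisj hL n K).trans ?_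
  have hn' : ((n : ℝ) + 1)⁻¹ ≤ (n : ℝ)⁻¹ :=
    inv_anti₀ (by exact_mod_cast hn) (by linarith)
  calc 2 * (b / a) ^ 2 * ((n : ℝ) + 1)⁻¹ * (P {ω | (ω 0).1 ∈ ⋃ k, B k}).toReal
      ≤ 2 * (b / a) ^ 2 * (n : ℝ)⁻¹ * (P {ω | (ω 0).1 ∈ ⋃ k, B k}).toReal := by gcongr
    _ = _ := by ring

/-- In the generalized Pólya urn setting with bounded weights `a ≤ Z₁ ≤ b`, for
pairwise disjoint `B₁, B₂, …`: `E(‖a_{n+1} − μ‖²) ≤ (c₁/n) P(Y₁ ∈ ⋃_k B_k)`. -/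
theorem stmt15 {𝒴 : Type*} [MeasurableSpace 𝒴] (P : Measure (ℕ → 𝒴 × ℝ))
    [IsProbabilityMeasure P] (α a b : ℝ) (hα : 0 < α) (hab : 0 < a ∧ a < b)
    (hZ : ∀ᵐ ω ∂P, ∀ n, (ω n).2 ∈ Set.Icc a b)
    (hindep : ∀ n : ℕ, ProbabilityTheory.Indep
      (MeasurableSpace.comap (fun ω => (ω n).2) inferInstance)
      (MeasurableSpace.comap
        (fun ω => ((fun i : Fin n => ω i), (ω n).1)) inferInstance) P)
    (hid : ∀ n : ℕ, P.map (fun ω => (ω n).2) = P.map (fun ω => (ω 0).2))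
    (hpred : ∀ B : Set 𝒴, MeasurableSet B → ∀ n : ℕ, 1 ≤ n →
      predY P n B =ᵐ[P] fun ω =>
        (α * (P {ω' | (ω' 0).1 ∈ B}).toReal
          + ∑ i ∈ Finset.range n, (ω i).2 * B.indicator (fun _ => (1 : ℝ)) ((ω i).1))
        / (α + ∑ i ∈ Finset.range n, (ω i).2))
    (μlimY : Set 𝒴 → (ℕ → 𝒴 × ℝ) → ℝ)
    (hmeas : ∀ B : Set 𝒴, MeasurableSet B → Measurable (μlimY B))
    (hlim : ∀ B : Set 𝒴, MeasurableSet B →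
      ∀ᵐ ω ∂P, Tendsto (fun n => predY P n B ω) atTop (nhds (μlimY B ω))) :
    ∃ c1 : ℝ, 0 < c1 ∧ ∀ B : ℕ → Set 𝒴, (∀ k, MeasurableSet (B k)) →
      Pairwise (Function.onFun Disjoint B) → ∀ n : ℕ, 1 ≤ n →
        ∫ ω, (⨆ k : ℕ, |predY P (n + 1) (B k) ω - μlimY (B k) ω|) ^ 2 ∂P
          ≤ c1 / n * (P {ω | (ω 0).1 ∈ ⋃ k, B k}).toReal :=
  stmt15_general P α a b hα hab hZ hindep hpred μlimY hlim
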